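/- Let G be a finite group and χ an irreducible complex character of G. Then the center of the quotient group G/[Z(χ),G] equals Z(χ)/[Z(χ),G]. -/

import Mathlib

open scoped Classical

def IsIrrChar (G : Type) [Group G] (χ : G → ℂ) : Prop :=
  ∃ V : FDRep ℂ G, CategoryTheory.Simple V ∧ χ = fun g => V.character g

def IsNlChar (G : Type) [Group G] (χ : G → ℂ) : Prop := IsIrrChar G χ ∧ χ 1 ≠ 1

def charCenter (G : Type) [Group G] (χ : G → ℂ) : Set G :=
  {g | ‖χ g‖ = ‖χ 1‖}

def charKer (G : Type) [Group G] (χ : G → ℂ) : Set G := {g | χ g = χ 1}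

open scoped commutatorElement in
def commSub (G : Type) [Group G] (S : Set G) : Subgroup G :=
  Subgroup.normalClosure {x | ∃ z ∈ S, ∃ g : G, x = ⁅z, g⁆}

def cdSet (G : Type) [Group G] : Set ℂ := {d | ∃ χ, IsIrrChar G χ ∧ χ 1 = d}

def IsGVZ (G : Type) [Group G] : Prop :=
  ∀ χ, IsIrrChar G χ → ∀ g, g ∉ charCenter G χ → χ g = 0

def charCenterSub (G : Type) [Group G] (χ : G → ℂ) : Subgroup G :=
  Subgroup.normalClosure (charCenter G χ)

noncomputable def charInner (G : Type) [Group G] (φ ψ : G → ℂ) : ℂ :=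
  (Nat.card G : ℂ)⁻¹ * ∑ᶠ g : G, φ g * star (ψ g)

noncomputable def inducedChar {G : Type} [Group G] (H : Subgroup G) (lam : H → ℂ) : G → ℂ :=
  fun g => (Nat.card H : ℂ)⁻¹ *
    ∑ᶠ x : G, if h : x * g * x⁻¹ ∈ H then lam ⟨x * g * x⁻¹, h⟩ else 0


instance (G : Type) [Group G] (S : Set G) : (commSub G S).Normal :=
  Subgroup.normalClosure_normal

instance (G : Type) [Group G] (χ : G → ℂ) : (charCenterSub G χ).Normal :=
  Subgroup.normalClosure_normal

/-!
Realise `χ` as the character of a simple representation `ρ`. Then `z ∈ Z(χ)` exactly when `ρ z`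
is a scalar: the eigenvalues of `ρ z` are roots of unity, so `|tr ρ z| = χ 1` is the equality case
of the triangle inequality and forces them all to coincide, while `ρ z` is diagonalisable because
it has finite order. Hence `[Z(χ), G] ≤ ker ρ`. Finally `z` is central modulo `N = [Z(χ), G]` iff
`⁅z, g⁆ ∈ N` for all `g`: this holds for `z ∈ Z(χ)` by the definition of `N`, and conversely it
makes `ρ z` commute with `ρ G`, so `ρ z` is a scalar by Schur's lemma.
-/

open CategoryTheory Module
open scoped commutatorElement

theorem Multiset.eq_inv_card_smul_sum_of_norm_sum_eq_card {E : Type*} [NormedAddCommGroup E]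
    [InnerProductSpace ℝ E] {m : Multiset E} (hm : ∀ x ∈ m, ‖x‖ = 1)
    (hsum : ‖m.sum‖ = Multiset.card m) : ∀ x ∈ m, x = (Multiset.card m : ℝ)⁻¹ • m.sum := by
  set n : ℝ := (Multiset.card m : ℝ)
  have hle : ∀ x ∈ m, inner ℝ m.sum x ≤ n := fun x hx => by
    simpa [hsum, hm x hx] using real_inner_le_norm m.sum x
  have hinner : (m.map (inner ℝ m.sum)).sum = n * n := by
    rw [← hsum, ← real_inner_self_eq_norm_mul_norm]
    exact (map_multiset_sum (innerₛₗ ℝ m.sum) m).symm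
  intro x hx
  have hx_eq : inner ℝ m.sum x = n := by
    by_contra hne
    have hlt := Multiset.sum_lt_sum (f := inner ℝ m.sum) (g := fun _ => n) hle
      ⟨x, hx, lt_of_le_of_ne (hle x hx) hne⟩
    simp [hinner, n] at hlt
  have hn : n ≠ 0 := by
    simpa [n] using Multiset.card_pos_iff_exists_mem.mpr ⟨x, hx⟩ |>.ne'
  have hray := inner_eq_norm_mul_iff_real.mp (by rw [hx_eq, hsum, hm x hx, mul_one])
  rw [hm x hx, one_smul, hsum] at hray
  rw [hray, inv_smul_smul₀ hn]

namespace Module.End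

section

variable {K V : Type*} [Field K] [AddCommGroup V] [Module K V]

theorem isSemisimple_of_pow_eq_one [FiniteDimensional K V] {u : End K V} {k : ℕ}
    (hk : (k : K) ≠ 0) (hu : u ^ k = 1) : u.IsSemisimple :=
  isSemisimple_of_squarefree_aeval_eq_zero
    (Polynomial.separable_X_pow_sub_C 1 hk one_ne_zero).squarefree (by simp [hu])

theorem HasEigenvalue.pow_eq_one {u : End K V} {μ : K} (hμ : u.HasEigenvalue μ) {k : ℕ}
    (hu : u ^ k = 1) : μ ^ k = 1 := by
  obtain ⟨v, hv⟩ := hμ.exists_hasEigenvector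
  have hv_pow := hv.pow_apply k
  rw [hu, one_apply] at hv_pow
  exact smul_left_injective K hv.2 (show μ ^ k • v = (1 : K) • v by rw [one_smul, ← hv_pow])

theorem IsSemisimple.eq_smul_one_of_forall_hasEigenvalue [IsAlgClosed K] [FiniteDimensional K V]
    {u : End K V} (hu : u.IsSemisimple) {c : K} (hc : ∀ μ, u.HasEigenvalue μ → μ = c) :
    u = c • 1 := by
  have htop : u.eigenspace c = ⊤ := by
    refine top_unique (hu.iSup_eigenspace_eq_top ▸ iSup_le fun μ => ?_)
    by_cases hμ : u.HasEigenvalue μ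
    · rw [hc μ hμ]
    · rw [hasEigenvalue_iff, not_not] at hμ
      simp [hμ]
  ext v
  simpa using mem_eigenspace_iff.mp (htop ▸ Submodule.mem_top : v ∈ u.eigenspace c)

end

theorem exists_eq_smul_one_of_norm_trace_eq {V : Type*} [AddCommGroup V] [Module ℂ V]
    [FiniteDimensional ℂ V] {u : End ℂ V} {k : ℕ}
    (hk : k ≠ 0) (hu : u ^ k = 1) (htr : ‖LinearMap.trace ℂ V u‖ = finrank ℂ V) :
    ∃ c : ℂ, u = c • 1 := by
  have hsplits := IsAlgClosed.splits u.charpoly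
  set roots := u.charpoly.roots
  have hsum : LinearMap.trace ℂ V u = roots.sum := trace_eq_sum_roots_charpoly_of_splits hsplits
  have hcard : Multiset.card roots = finrank ℂ V := by
    rw [Polynomial.splits_iff_card_roots.mp hsplits, LinearMap.charpoly_natDegree]
  have hroot : ∀ μ, u.HasEigenvalue μ → μ ∈ roots := fun μ hμ =>
    (Polynomial.mem_roots u.charpoly_monic.ne_zero).mpr
      ((hasEigenvalue_iff_isRoot_charpoly u μ).mp hμ)
  have hnorm : ∀ μ ∈ roots, ‖μ‖ = 1 := fun μ hμ =>
    Complex.norm_eq_one_of_pow_eq_one (((hasEigenvalue_iff_isRoot_charpoly u μ).mpr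
      (Polynomial.isRoot_of_mem_roots hμ)).pow_eq_one hu) hk
  have hconst := Multiset.eq_inv_card_smul_sum_of_norm_sum_eq_card hnorm
    (by rw [← hsum, htr, hcard])
  have hss := isSemisimple_of_pow_eq_one (Nat.cast_ne_zero.mpr hk) hu
  exact ⟨_, hss.eq_smul_one_of_forall_hasEigenvalue fun μ hμ => hconst μ (hroot μ hμ)⟩

end Module.End

theorem QuotientGroup.mk_mem_center_iff {G : Type*} [Group G] {N : Subgroup G} [N.Normal]
    {z : G} : (z : G ⧸ N) ∈ Subgroup.center (G ⧸ N) ↔ ∀ g, ⁅z, g⁆ ∈ N := by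
  simp only [Subgroup.mem_center_iff, QuotientGroup.forall_mk, ← QuotientGroup.mk_mul,
    eq_comm (a := ((_ * z : G) : G ⧸ N)), QuotientGroup.eq_iff_div_mem, commutatorElement_def,
    div_eq_mul_inv, mul_inv_rev, mul_assoc]

theorem MonoidHom.commutatorElement_mem_ker_iff {G M : Type*} [Group G] [Monoid M] (f : G →* M)
    {a b : G} : ⁅a, b⁆ ∈ f.ker ↔ Commute (f a) (f b) := by
  rw [commutatorElement_def, show a * b * a⁻¹ * b⁻¹ = a * b * (b * a)⁻¹ by group,
    f.normal_ker.mem_comm_iff, ← f.eq_iff, map_mul, map_mul]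
  rfl

namespace FDRep

variable {G : Type} [Group G]

theorem exists_eq_smul_one_of_forall_commute (V : FDRep ℂ G) [Simple V] {f : End ℂ V}
    (hf : ∀ g, Commute f (V.ρ g)) : ∃ c : ℂ, f = c • 1 := by
  let φ : V ⟶ V :=
    ⟨InducedCategory.homMk (ModuleCat.ofHom f), fun g => FGModuleCat.hom_ext (hf g).eq⟩
  obtain ⟨c, hc⟩ := endomorphism_simple_eq_smul_id ℂ φ
  exact ⟨c, congrArg (fun ψ : V ⟶ V => ψ.hom.hom.hom) hc.symm⟩

variable [Finite G]

theorem mem_charCenter_iff (V : FDRep ℂ G) {z : G} :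
    z ∈ charCenter G (fun g => V.character g) ↔ ∃ c : ℂ, V.ρ z = c • 1 := by
  have hpow : V.ρ z ^ orderOf z = 1 := by rw [← map_pow, pow_orderOf_eq_one, map_one]
  have hk : orderOf z ≠ 0 := (orderOf_pos z).ne'
  change ‖V.character z‖ = ‖V.character 1‖ ↔ _
  rw [char_one, Complex.norm_natCast]
  constructor
  · exact End.exists_eq_smul_one_of_norm_trace_eq hk hpow
  · rintro ⟨c, hc⟩
    have htr : c ^ orderOf z * finrank ℂ V = finrank ℂ V := by
      simpa [hc, smul_pow] using congrArg (LinearMap.trace ℂ V) hpow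
    rcases eq_or_ne (finrank ℂ V) 0 with h0 | h0
    · simp [character, hc, h0]
    · have hc1 := Complex.norm_eq_one_of_pow_eq_one
        ((mul_eq_right₀ (Nat.cast_ne_zero.mpr h0)).mp htr) hk
      simp [character, hc, hc1]

theorem commSub_charCenter_le_ker (V : FDRep ℂ G) :
    commSub G (charCenter G (fun g => V.character g)) ≤ V.ρ.ker := by
  refine Subgroup.normalClosure_le_normal ?_
  rintro _ ⟨z, hz, g, rfl⟩
  obtain ⟨c, hc⟩ := (mem_charCenter_iff V).mp hz
  rw [SetLike.mem_coe, MonoidHom.commutatorElement_mem_ker_iff, hc]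
  exact (Commute.one_left _).smul_left c

end FDRep

theorem stmt1 (G : Type) [Group G] [Finite G] (χ : G → ℂ) (hχ : IsIrrChar G χ) :
    (Subgroup.center (G ⧸ commSub G (charCenter G χ)) :
        Set (G ⧸ commSub G (charCenter G χ))) =
      QuotientGroup.mk '' (charCenter G χ) := by
  obtain ⟨V, hV, rfl⟩ := hχ
  ext x
  constructor
  · intro hx
    obtain ⟨z, rfl⟩ := QuotientGroup.mk_surjective x
    have hcomm : ∀ g, Commute (V.ρ z) (V.ρ g) := fun g => V.ρ.commutatorElement_mem_ker_iff.mp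
      (FDRep.commSub_charCenter_le_ker V (QuotientGroup.mk_mem_center_iff.mp hx g))
    exact ⟨z, (FDRep.mem_charCenter_iff V).mpr (V.exists_eq_smul_one_of_forall_commute hcomm), rfl⟩
  · rintro ⟨z, hz, rfl⟩
    exact QuotientGroup.mk_mem_center_iff.mpr fun g =>
      Subgroup.subset_normalClosure ⟨z, hz, g, rfl⟩
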